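/- Let r ≥ 4 and let r = r₁ + … + r_m be a partition of r into positive integers. Then Σ_{1≤i<j≤m} r_i r_j (j−i)² ≤ r²(r²−1)/12, with equality if and only if r_i = 1 for every i (equivalently m = r). -/
import Mathlib


/-!
STATEMENT 15.  Let `r ≥ 4` and let `r = r₁ + … + r_m` be a partition of `r` into
positive integers.  Then `Σ_{1≤i<j≤m} rᵢrⱼ(j−i)² ≤ r²(r²−1)/12`, with equality if
and only if `rᵢ = 1` for every `i` (equivalently `m = r`).

(The inequality is stated in `ℕ`, cleared of the denominator `12`.)
-/
open Finset

lemma st15_count (a n c : ℕ) (h : a ≤ n) :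
    ∑ u ∈ range n, (if u < a then c else 0) = a * c := by
  rw [← Finset.sum_filter]
  have : (range n).filter (· < a) = range a := by
    ext x; simp; omega
  rw [this, Finset.sum_const, card_range, smul_eq_mul]

lemma st15_nest (n j : ℕ) (g : ℕ → ℕ) (h : j ≤ n) :
    ∑ x ∈ range n, (if x < j then g x else 0) = ∑ x ∈ range j, g x := by
  rw [← Finset.sum_filter]
  apply Finset.sum_congr
  · ext x; simp; omega
  · intros; rfl

lemma st15_sumsq (n : ℕ) : 6 * ∑ k ∈ range n, (k+1)^2 = n*(n+1)*(2*n+1) := by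
  induction n with
  | zero => simp
  | succ k ih => rw [Finset.sum_range_succ, Nat.mul_add, ih]; ring

lemma st15_T (n : ℕ) :
    12 * ∑ b ∈ range n, ∑ a ∈ range b, (b-a)^2 = n^2 * (n^2 - 1) := by
  induction n with
  | zero => simp
  | succ k ih =>
    rw [Finset.sum_range_succ, Nat.mul_add, ih]
    have h1 : ∑ a ∈ range k, (k-a)^2 = ∑ a ∈ range k, (a+1)^2 := by
      rw [← Finset.sum_range_reflect]
      apply Finset.sum_congr rfl
      intro x hx
      simp only [Finset.mem_range] at hx
      congr 1
      omega
    have h2 := st15_sumsq k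
    have h3 : (k+1)^2 - 1 = k^2 + 2*k := by
      have : (k+1)^2 = k^2+2*k+1 := by ring
      omega
    rcases Nat.eq_zero_or_pos k with hk | hk
    · subst hk; simp
    · obtain ⟨j, rfl⟩ : ∃ j, k = j + 1 := ⟨k - 1, by omega⟩
      have h4 : (j+1)^2 - 1 = j^2 + 2*j := by
        have : (j+1)^2 = j^2+2*j+1 := by ring
        omega
      have hS : 12 * ∑ a ∈ range (j+1), (a+1)^2 = 2*((j+1)*(j+1+1)*(2*(j+1)+1)) := by omega
      rw [h1, h3, h4]
      nlinarith [hS]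

def st15_S (f : ℕ → ℕ) (n : ℕ) : ℕ := ∑ k ∈ range n, f k

lemma st15_S_le (f : ℕ → ℕ) (hf : ∀ k, 0 < f k) (a b : ℕ) (h : a ≤ b) :
    st15_S f a + (b - a) ≤ st15_S f b := by
  induction b, h using Nat.le_induction with
  | base => simp
  | succ n hn ih =>
    have h1 : st15_S f (n+1) = st15_S f n + f n := Finset.sum_range_succ f n
    have h2 := hf n
    omega

lemma st15_inj (f : ℕ → ℕ) (hf : ∀ k, 0 < f k) (i j u v : ℕ)
    (hu : u < f i) (hv : v < f j) (h : st15_S f i + u = st15_S f j + v) :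
    i = j ∧ u = v := by
  rcases lt_trichotomy i j with hij | hij | hij
  · have h1 := st15_S_le f hf (i+1) j hij
    have h2 : st15_S f (i+1) = st15_S f i + f i := Finset.sum_range_succ f i
    omega
  · subst hij; omega
  · have h1 := st15_S_le f hf (j+1) i hij
    have h2 : st15_S f (j+1) = st15_S f j + f j := Finset.sum_range_succ f j
    omega

lemma st15_dist (f : ℕ → ℕ) (hf : ∀ k, 0 < f k) (i j u v : ℕ)
    (hu : u < f i) (h : i < j) :
    st15_S f i + u + (j - i) ≤ st15_S f j + v := by
  have h1 := st15_S_le f hf (i+1) j h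
  have h2 : st15_S f (i+1) = st15_S f i + f i := Finset.sum_range_succ f i
  omega

lemma st15_core (r m : ℕ) (rp : Fin m → ℕ) (hpos : ∀ i, 0 < rp i) (hsum : ∑ i, rp i = r) :
    (∑ i : Fin m, ∑ j : Fin m, if i < j then rp i * rp j * ((j:ℕ) - (i:ℕ))^2 else 0)
        + (if ∀ i, rp i = 1 then 0 else 1)
      ≤ ∑ b ∈ range r, ∑ a ∈ range b, (b - a)^2 := by
  classical
  set f : ℕ → ℕ := fun k => if h : k < m then rp ⟨k, h⟩ else 1 with hfdef
  have hf : ∀ k, 0 < f k := by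
    intro k; simp only [hfdef]; split
    · exact hpos _
    · exact one_pos
  have hfr : ∀ i : Fin m, f (i : ℕ) = rp i := by
    intro i; simp only [hfdef]; rw [dif_pos i.isLt]
  have hSm : st15_S f m = r := by
    rw [st15_S, ← hsum, ← Fin.sum_univ_eq_sum_range]
    exact Finset.sum_congr rfl fun i _ => hfr i
  have hle : ∀ i : Fin m, rp i ≤ r := by
    intro i
    rw [← hsum]
    exact Finset.single_le_sum (fun _ _ => Nat.zero_le _) (mem_univ i)
  have hSlt : ∀ (i : Fin m) (u : ℕ), u < rp i → st15_S f (i : ℕ) + u < r := by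
    intro i u hu
    have h1 := st15_S_le f hf ((i : ℕ) + 1) m i.isLt
    have h2 : st15_S f ((i:ℕ)+1) = st15_S f (i:ℕ) + f (i:ℕ) := Finset.sum_range_succ f (i:ℕ)
    rw [hfr i] at h2
    omega
  set Q : Finset ((Fin m × Fin m) × (ℕ × ℕ)) :=
    ((univ ×ˢ univ) ×ˢ (range r ×ˢ range r)).filter
      (fun q => q.1.1 < q.1.2 ∧ q.2.1 < rp q.1.1 ∧ q.2.2 < rp q.1.2) with hQdef
  set e : (Fin m × Fin m) × (ℕ × ℕ) → ℕ × ℕ :=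
    fun q => (st15_S f (q.1.1 : ℕ) + q.2.1, st15_S f (q.1.2 : ℕ) + q.2.2) with hedef
  set t : Finset (ℕ × ℕ) := (range r ×ˢ range r).filter (fun p => p.1 < p.2) with htdef
  set g : ℕ × ℕ → ℕ := fun p => (p.2 - p.1)^2 with hgdef
  have hmemQ : ∀ q, q ∈ Q ↔ q.1.1 < q.1.2 ∧ q.2.1 < rp q.1.1 ∧ q.2.2 < rp q.1.2 := by
    intro q
    simp only [hQdef, Finset.mem_filter, Finset.mem_product, Finset.mem_range, mem_univ,
      true_and]
    constructor
    · tauto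
    · rintro ⟨h1, h2, h3⟩
      exact ⟨⟨lt_of_lt_of_le h2 (hle _), lt_of_lt_of_le h3 (hle _)⟩, h1, h2, h3⟩
  -- Claim 1 : LHS' = ∑ over Q
  have hQsum : (∑ i : Fin m, ∑ j : Fin m, if i < j then rp i * rp j * ((j:ℕ) - (i:ℕ))^2 else 0)
      = ∑ q ∈ Q, (((q.1.2 : Fin m) : ℕ) - ((q.1.1 : Fin m) : ℕ))^2 := by
    rw [hQdef, Finset.sum_filter, Finset.sum_product, Finset.sum_product]
    apply Finset.sum_congr rfl
    intro i _
    apply Finset.sum_congr rfl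
    intro j _
    rw [Finset.sum_product]
    by_cases hij : i < j
    · simp only [hij, true_and, if_true]
      have h1 : ∀ u : ℕ, (∑ v ∈ range r, if u < rp i ∧ v < rp j then ((j:ℕ) - (i:ℕ))^2 else 0)
          = (if u < rp i then rp j * ((j:ℕ) - (i:ℕ))^2 else 0) := by
        intro u
        by_cases hu : u < rp i
        · simp only [hu, true_and, if_true]
          exact st15_count (rp j) r _ (hle j)
        · simp [hu]
      rw [Finset.sum_congr rfl (fun u _ => h1 u), st15_count (rp i) r _ (hle i)]
      ring
    · simp [hij]
  -- claims about e
  have hmaps : ∀ q ∈ Q, e q ∈ t := by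
    intro q hq
    rw [hmemQ] at hq
    obtain ⟨h1, h2, h3⟩ := hq
    have hd := st15_dist f hf (q.1.1 : ℕ) (q.1.2 : ℕ) q.2.1 q.2.2
      (by rw [hfr]; exact h2) h1
    simp only [htdef, hedef, Finset.mem_filter, Finset.mem_product, Finset.mem_range]
    refine ⟨⟨hSlt _ _ h2, hSlt _ _ h3⟩, ?_⟩
    have : (q.1.1 : ℕ) < (q.1.2 : ℕ) := h1
    omega
  have hinj : ∀ q ∈ Q, ∀ q' ∈ Q, e q = e q' → q = q' := by
    intro q hq q' hq' heq
    rw [hmemQ] at hq hq'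
    have e1 : st15_S f (q.1.1 : ℕ) + q.2.1 = st15_S f (q'.1.1 : ℕ) + q'.2.1 :=
      congrArg Prod.fst heq
    have e2 : st15_S f (q.1.2 : ℕ) + q.2.2 = st15_S f (q'.1.2 : ℕ) + q'.2.2 :=
      congrArg Prod.snd heq
    have i1 := st15_inj f hf _ _ _ _ (by rw [hfr]; exact hq.2.1) (by rw [hfr]; exact hq'.2.1) e1
    have i2 := st15_inj f hf _ _ _ _ (by rw [hfr]; exact hq.2.2) (by rw [hfr]; exact hq'.2.2) e2
    have : q.1 = q'.1 := Prod.ext (Fin.ext i1.1) (Fin.ext i2.1)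
    have : q.2 = q'.2 := Prod.ext i1.2 i2.2
    exact Prod.ext ‹q.1 = q'.1› this
  -- pointwise bound
  have hpt : ∀ q ∈ Q, (((q.1.2 : Fin m) : ℕ) - ((q.1.1 : Fin m) : ℕ))^2 ≤ g (e q) := by
    intro q hq
    rw [hmemQ] at hq
    have hd := st15_dist f hf (q.1.1 : ℕ) (q.1.2 : ℕ) q.2.1 q.2.2
      (by rw [hfr]; exact hq.2.1) hq.1
    simp only [hgdef, hedef]
    exact Nat.pow_le_pow_left (by omega) 2
  -- t sum value
  have htsum : ∑ p ∈ t, g p = ∑ b ∈ range r, ∑ a ∈ range b, (b - a)^2 := by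
    rw [htdef, Finset.sum_filter, Finset.sum_product, Finset.sum_comm]
    apply Finset.sum_congr rfl
    intro b hb
    exact st15_nest r b (fun a => (b - a)^2) (le_of_lt (mem_range.1 hb))
  rw [hQsum, ← htsum]
  by_cases hall : ∀ i, rp i = 1
  · rw [if_pos hall, add_zero]
    calc ∑ q ∈ Q, (((q.1.2 : Fin m) : ℕ) - ((q.1.1 : Fin m) : ℕ))^2
        ≤ ∑ q ∈ Q, g (e q) := Finset.sum_le_sum hpt
      _ = ∑ p ∈ Q.image e, g p := (Finset.sum_image hinj).symm
      _ ≤ ∑ p ∈ t, g p := Finset.sum_le_sum_of_subset (by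
          intro p hp
          obtain ⟨q, hq, rfl⟩ := Finset.mem_image.1 hp
          exact hmaps q hq)
  · rw [if_neg hall]
    push_neg at hall
    obtain ⟨i0, hi0⟩ := hall
    have h2 : 2 ≤ rp i0 := by have := hpos i0; omega
    set p0 : ℕ × ℕ := (st15_S f (i0 : ℕ), st15_S f (i0 : ℕ) + 1) with hp0def
    have hp0t : p0 ∈ t := by
      have := hSlt i0 1 h2
      have := hSlt i0 0 (hpos i0)
      simp only [htdef, hp0def, Finset.mem_filter, Finset.mem_product, Finset.mem_range]
      omega
    have hp0g : g p0 = 1 := by simp [hgdef, hp0def]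
    have hsub : Q.image e ⊆ t.erase p0 := by
      intro p hp
      obtain ⟨q, hq, rfl⟩ := Finset.mem_image.1 hp
      rw [Finset.mem_erase]
      refine ⟨?_, hmaps q hq⟩
      intro hcon
      rw [hmemQ] at hq
      have e1 : st15_S f (q.1.1 : ℕ) + q.2.1 = st15_S f (i0 : ℕ) + 0 := by
        have := congrArg Prod.fst hcon
        simpa [hedef, hp0def] using this
      have e2 : st15_S f (q.1.2 : ℕ) + q.2.2 = st15_S f (i0 : ℕ) + 1 := by
        have := congrArg Prod.snd hcon
        simpa [hedef, hp0def] using this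
      have i1 := st15_inj f hf _ _ _ _ (by rw [hfr]; exact hq.2.1)
        (by rw [hfr]; exact hpos i0) e1
      have i2 := st15_inj f hf _ _ _ _ (by rw [hfr]; exact hq.2.2)
        (by rw [hfr]; exact h2) e2
      have : (q.1.1 : ℕ) < (q.1.2 : ℕ) := hq.1
      omega
    have step1 : ∑ q ∈ Q, (((q.1.2 : Fin m) : ℕ) - ((q.1.1 : Fin m) : ℕ))^2
        ≤ ∑ p ∈ t.erase p0, g p := by
      calc ∑ q ∈ Q, (((q.1.2 : Fin m) : ℕ) - ((q.1.1 : Fin m) : ℕ))^2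
          ≤ ∑ q ∈ Q, g (e q) := Finset.sum_le_sum hpt
        _ = ∑ p ∈ Q.image e, g p := (Finset.sum_image hinj).symm
        _ ≤ ∑ p ∈ t.erase p0, g p := Finset.sum_le_sum_of_subset hsub
    have step2 : ∑ p ∈ t.erase p0, g p + g p0 = ∑ p ∈ t, g p :=
      Finset.sum_erase_add t g hp0t
    omega

lemma st15_ones (n : ℕ) :
    (∑ i : Fin n, ∑ j : Fin n, if i < j then ((j:ℕ) - (i:ℕ))^2 else 0)
      = ∑ b ∈ range n, ∑ a ∈ range b, (b - a)^2 := by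
  rw [Finset.sum_comm]
  simp only [Fin.lt_def]
  rw [Fin.sum_univ_eq_sum_range
    (fun b => ∑ i : Fin n, if (i:ℕ) < b then (b - (i:ℕ))^2 else 0) n]
  apply Finset.sum_congr rfl
  intro b hb
  rw [Fin.sum_univ_eq_sum_range (fun a => if a < b then (b - a)^2 else 0) n]
  exact st15_nest n b _ (le_of_lt (mem_range.1 hb))


theorem statement15
    (r m : ℕ) (hr : 4 ≤ r)
    (rp : Fin m → ℕ) (hpos : ∀ i, 0 < rp i) (hsum : ∑ i, rp i = r) :
    12 * (∑ i : Fin m, ∑ j : Fin m,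
        if i < j then rp i * rp j * ((j : ℕ) - (i : ℕ)) ^ 2 else 0)
      ≤ r ^ 2 * (r ^ 2 - 1) ∧
    (12 * (∑ i : Fin m, ∑ j : Fin m,
        if i < j then rp i * rp j * ((j : ℕ) - (i : ℕ)) ^ 2 else 0)
      = r ^ 2 * (r ^ 2 - 1) ↔ ∀ i, rp i = 1) ∧
    ((∀ i, rp i = 1) ↔ m = r) := by
  have key := st15_core r m rp hpos hsum
  have hT := st15_T r
  have part3 : (∀ i, rp i = 1) ↔ m = r := by
    constructor
    · intro h
      rw [← hsum]
      simp [h]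
    · intro h
      by_contra hc
      push_neg at hc
      obtain ⟨i0, hi0⟩ := hc
      have hlt : ∑ i : Fin m, (1:ℕ) < ∑ i, rp i :=
        Finset.sum_lt_sum (fun i _ => hpos i) ⟨i0, mem_univ i0, by have := hpos i0; omega⟩
      rw [hsum] at hlt
      simp at hlt
      omega
  refine ⟨?_, ?_, part3⟩
  · have h1 : (∑ i : Fin m, ∑ j : Fin m,
        if i < j then rp i * rp j * ((j : ℕ) - (i : ℕ)) ^ 2 else 0)
        ≤ ∑ b ∈ range r, ∑ a ∈ range b, (b - a)^2 :=
      le_trans (Nat.le_add_right _ _) key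
    omega
  · constructor
    · intro heq
      by_contra hc
      rw [if_neg hc] at key
      omega
    · intro h
      have hm : m = r := part3.mp h
      have hL : (∑ i : Fin m, ∑ j : Fin m,
          if i < j then rp i * rp j * ((j : ℕ) - (i : ℕ)) ^ 2 else 0)
          = ∑ b ∈ range m, ∑ a ∈ range b, (b - a)^2 := by
        rw [← st15_ones m]
        apply Finset.sum_congr rfl
        intro i _
        apply Finset.sum_congr rfl
        intro j _
        simp [h]
      rw [hL, ← hm]
      exact st15_T m
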